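/- On ℝ⁸_{>0} with coordinates (σ₁,…,σ₆,τ₁,τ₂) and the Poisson bracket {f,g} = Σ_{i,j} 2ε_{ij} X_i X_j (∂f/∂X_i)(∂g/∂X_j) (ε as in the Fock–Goncharov structure for the pair of pants: ε_{i7} = (−1)^{i+1}, ε_{i8} = (−1)^{i} for 1 ≤ i ≤ 6, antisymmetric, other entries zero), the functions 𝓘 = (log τ₁ − log τ₂)/4 and 𝓔 = −(1/12)·Σ_{i=1}^{6} (−1)^{i+1} log σ_i satisfy {𝓘, 𝓔} = 1/2 identically. -/

import Mathlib

/-!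
In the logarithmic coordinates `xᵢ = log Xᵢ` the operator `Xᵢ ∂ᵢ` becomes `∂/∂xᵢ`, so the bracket
is the constant one `{xᵢ, xⱼ} = 2 εᵢⱼ`. Both `𝓘` and `𝓔` are linear in the `xᵢ`, hence `{𝓘, 𝓔}`
is the constant `2 aᵀ ε b` of their coefficient vectors; its twelve nonzero terms (`τ` against
`σ`) each contribute `1/24`.
-/

/-- The ε matrix of the Fock–Goncharov Poisson structure for the pair of pants
(0-indexed coordinates (X₀,…,X₇) = (σ₁,…,σ₆,τ₁,τ₂)). -/
def fgEps (i j : Fin 8) : ℝ :=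
  if i.val ≤ 5 ∧ j.val = 6 then (-1 : ℝ) ^ i.val
  else if i.val ≤ 5 ∧ j.val = 7 then (-1 : ℝ) ^ (i.val + 1)
  else if i.val = 6 ∧ j.val ≤ 5 then -((-1 : ℝ) ^ j.val)
  else if i.val = 7 ∧ j.val ≤ 5 then -((-1 : ℝ) ^ (j.val + 1))
  else 0

/-- The Fock–Goncharov Poisson bracket {f,g}(X) = Σ 2 ε_{ij} X_i X_j ∂_i f ∂_j g. -/
noncomputable def fgBracket (f g : (Fin 8 → ℝ) → ℝ) (X : Fin 8 → ℝ) : ℝ :=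
  ∑ i : Fin 8, ∑ j : Fin 8,
    2 * fgEps i j * X i * X j *
      (fderiv ℝ f X (Pi.single i 1)) * (fderiv ℝ g X (Pi.single j 1))

/-- The logarithm of the Laurent monomial `∏ₖ Yₖ ^ aₖ`. -/
noncomputable def logMonomial {ι : Type*} [Fintype ι] (a : ι → ℝ) (Y : ι → ℝ) : ℝ :=
  ∑ k, a k * Real.log (Y k)

theorem hasFDerivAt_logMonomial {ι : Type*} [Fintype ι] (a X : ι → ℝ) (hX : ∀ k, X k ≠ 0) :
    HasFDerivAt (logMonomial a)
      (∑ k, (a k / X k) • ContinuousLinearMap.proj (R := ℝ) (φ := fun _ : ι => ℝ) k) X := by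
  refine HasFDerivAt.fun_sum fun k _ => ?_
  refine (((hasFDerivAt_apply k X).log (hX k)).const_mul (a k)).congr_fderiv ?_
  rw [smul_smul, div_eq_mul_inv]

theorem mul_fderiv_logMonomial_single {ι : Type*} [Fintype ι] [DecidableEq ι] (a X : ι → ℝ)
    (hX : ∀ k, X k ≠ 0) (i : ι) :
    X i * fderiv ℝ (logMonomial a) X (Pi.single i 1) = a i := by
  rw [(hasFDerivAt_logMonomial a X hX).fderiv]
  simp [Pi.single_apply, mul_div_cancel₀ _ (hX i)]

theorem fgBracket_logMonomial (a b X : Fin 8 → ℝ) (hX : ∀ k, X k ≠ 0) :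
    fgBracket (logMonomial a) (logMonomial b) X = ∑ i, ∑ j, 2 * fgEps i j * a i * b j := by
  unfold fgBracket
  refine Finset.sum_congr rfl fun i _ => Finset.sum_congr rfl fun j _ => ?_
  rw [← mul_fderiv_logMonomial_single a X hX i, ← mul_fderiv_logMonomial_single b X hX j]
  ring

/-- The Hamiltonian functions 𝓘 = (log τ₁ − log τ₂)/4 and
𝓔 = −(1/12) Σᵢ (−1)^{i+1} log σᵢ satisfy {𝓘, 𝓔} = 1/2 identically on the
positive octant. -/
theorem fg_bracket_hexagon_eruption (X : Fin 8 → ℝ) (hX : ∀ i, 0 < X i) :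
    fgBracket
      (fun Y => (Real.log (Y 6) - Real.log (Y 7)) / 4)
      (fun Y => -(1/12) * (Real.log (Y 0) - Real.log (Y 1) + Real.log (Y 2)
        - Real.log (Y 3) + Real.log (Y 4) - Real.log (Y 5)))
      X = 1/2 := by
  have hI : (fun Y : Fin 8 → ℝ => (Real.log (Y 6) - Real.log (Y 7)) / 4)
      = logMonomial ![0, 0, 0, 0, 0, 0, 1/4, -1/4] := by
    funext Y
    simp only [logMonomial, Fin.sum_univ_eight, Matrix.cons_val]
    ring
  have hE : (fun Y : Fin 8 → ℝ => -(1/12) * (Real.log (Y 0) - Real.log (Y 1) + Real.log (Y 2)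
        - Real.log (Y 3) + Real.log (Y 4) - Real.log (Y 5)))
      = logMonomial ![-1/12, 1/12, -1/12, 1/12, -1/12, 1/12, 0, 0] := by
    funext Y
    simp only [logMonomial, Fin.sum_univ_eight, Matrix.cons_val]
    ring
  rw [hI, hE, fgBracket_logMonomial _ _ X fun i => (hX i).ne']
  simp [Fin.sum_univ_eight, fgEps]
  norm_num
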